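/- arXiv:1704.03564 — 5 statements merged into one kernel-verified Lean document; each statement's English description precedes it below -/
import Mathlib

section
/- Let x₁, …, xₘ ∈ ℤ^d with entries in {0, …, N}, and suppose 2^{m−1} > (2(m-1)N + 1)^d. Then there exists an index i* with 2 ≤ i* ≤ m and nonnegative reals α₁, …, α_{i*−2} such that x_{i*} − x₁ = Σᵢ₌₁^{i*−2} αᵢ (xᵢ₊₁ − xᵢ). -/
private lemma tele4 (f : ℕ → ℤ) (k : ℕ) :
    ∑ i ∈ Finset.Icc 1 k, (f (i + 1) - f i) = f (k + 1) - f 1 := by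
  induction k with
  | zero => simp
  | succ n ih =>
    rw [Finset.sum_Icc_succ_top (by omega), ih]; ring

private lemma key4 (d m N : ℕ) (x : ℕ → (Fin d → ℤ))
    (S' T' : Finset ℕ) (hS'sub : S' ⊆ Finset.Icc 1 (m - 1))
    (hT'sub : T' ⊆ Finset.Icc 1 (m - 1))
    (k : ℕ) (hkS : k ∈ S') (hkT : k ∉ T')
    (hsum : ∑ i ∈ S', (x (i + 1) - x i) = ∑ i ∈ T', (x (i + 1) - x i))
    (hmaxS : ∀ i ∈ S', i ≤ k) (hmaxT : ∀ i ∈ T', i ≤ k) :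
    ∃ i', 2 ≤ i' ∧ i' ≤ m ∧ ∃ α : ℕ → ℝ, (∀ i, 0 ≤ α i) ∧
      (fun j => (x i' j : ℝ)) - (fun j => (x 1 j : ℝ)) =
        ∑ i ∈ Finset.Icc 1 (i' - 2),
          α i • ((fun j => (x (i + 1) j : ℝ)) - fun j => (x i j : ℝ)) := by
  have hkIcc := hS'sub hkS
  rw [Finset.mem_Icc] at hkIcc
  obtain ⟨hk1, hkm⟩ := hkIcc
  have hm : 2 ≤ m := by omega
  set c : ℕ → ℤ := fun i =>
    1 + (if i ∈ T' then 1 else 0) - (if i ∈ S' then 1 else 0) with hc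
  have hcnn : ∀ i, (0 : ℤ) ≤ c i := by
    intro i; simp only [hc]; split_ifs <;> norm_num
  refine ⟨k + 1, by omega, by omega, fun i => ((c i : ℤ) : ℝ), ?_, ?_⟩
  · intro i; exact Int.cast_nonneg_iff.mpr (hcnn i)
  · funext j
    have hsumj : ∑ i ∈ S', (x (i + 1) j - x i j) = ∑ i ∈ T', (x (i + 1) j - x i j) := by
      have := congrFun hsum j
      simpa [Finset.sum_apply] using this
    have hS'k : S' ⊆ Finset.Icc 1 k := by
      intro i hi
      have := hS'sub hi; rw [Finset.mem_Icc] at this ⊢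
      exact ⟨this.1, hmaxS i hi⟩
    have hT'k : T' ⊆ Finset.Icc 1 k := by
      intro i hi
      have := hT'sub hi; rw [Finset.mem_Icc] at this ⊢
      exact ⟨this.1, hmaxT i hi⟩
    have hZ : ∑ i ∈ Finset.Icc 1 (k - 1), c i * (x (i + 1) j - x i j)
        = x (k + 1) j - x 1 j := by
      have h1 : ∑ i ∈ Finset.Icc 1 k, c i * (x (i + 1) j - x i j)
          = (∑ i ∈ Finset.Icc 1 k, (x (i + 1) j - x i j))
            + (∑ i ∈ T', (x (i + 1) j - x i j))
            - (∑ i ∈ S', (x (i + 1) j - x i j)) := by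
        have hT'eq : ∑ i ∈ Finset.Icc 1 k, (if i ∈ T' then (x (i + 1) j - x i j) else 0)
            = ∑ i ∈ T', (x (i + 1) j - x i j) := by
          rw [Finset.sum_ite_mem, Finset.inter_eq_right.mpr hT'k]
        have hS'eq : ∑ i ∈ Finset.Icc 1 k, (if i ∈ S' then (x (i + 1) j - x i j) else 0)
            = ∑ i ∈ S', (x (i + 1) j - x i j) := by
          rw [Finset.sum_ite_mem, Finset.inter_eq_right.mpr hS'k]
        rw [← hT'eq, ← hS'eq, ← Finset.sum_add_distrib, ← Finset.sum_sub_distrib]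
        apply Finset.sum_congr rfl
        intro i _
        simp only [hc]
        split_ifs <;> ring
      have h2 : ∑ i ∈ Finset.Icc 1 k, c i * (x (i + 1) j - x i j)
          = (∑ i ∈ Finset.Icc 1 (k - 1), c i * (x (i + 1) j - x i j))
            + c k * (x (k + 1) j - x k j) := by
        obtain ⟨k', rfl⟩ : ∃ k', k = k' + 1 := ⟨k - 1, by omega⟩
        rw [Finset.sum_Icc_succ_top (by omega)]
        simp
      have hck : c k = 0 := by simp [hc, hkS, hkT]
      rw [hck] at h2
      rw [tele4 (fun i => x i j) k] at h1
      simp at h2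
      rw [← h2, h1, hsumj]
      ring
    have hk2 : k + 1 - 2 = k - 1 := by omega
    simp only [Pi.sub_apply, Finset.sum_apply, Pi.smul_apply, smul_eq_mul, hk2]
    have h := congrArg (fun z : ℤ => (z : ℝ)) hZ
    push_cast at h
    rw [← h]

theorem stmt4 (d m N : ℕ) (x : ℕ → (Fin d → ℤ))
    (hx : ∀ i, 1 ≤ i → i ≤ m → ∀ j, 0 ≤ x i j ∧ x i j ≤ (N : ℤ))
    (hcard : (2 : ℕ) ^ (m - 1) > (2 * (m - 1) * N + 1) ^ d) :
    ∃ i', 2 ≤ i' ∧ i' ≤ m ∧ ∃ α : ℕ → ℝ, (∀ i, 0 ≤ α i) ∧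
      (fun j => (x i' j : ℝ)) - (fun j => (x 1 j : ℝ)) =
        ∑ i ∈ Finset.Icc 1 (i' - 2),
          α i • ((fun j => (x (i + 1) j : ℝ)) - fun j => (x i j : ℝ)) := by
  classical
  set M : ℤ := ((m - 1 : ℕ) : ℤ) * N with hM
  set F : Finset ℕ → (Fin d → ℤ) := fun S => ∑ i ∈ S, (x (i + 1) - x i) with hF
  have hmaps : ∀ S ∈ (Finset.Icc 1 (m - 1)).powerset,
      F S ∈ Finset.Icc (fun _ : Fin d => -M) (fun _ => M) := by
    intro S hS
    rw [Finset.mem_powerset] at hS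
    have hcardS : (S.card : ℤ) ≤ ((m - 1 : ℕ) : ℤ) := by
      have := Finset.card_le_card hS
      rw [Nat.card_Icc] at this
      exact_mod_cast (by omega : S.card ≤ m - 1)
    have hb : ∀ i ∈ S, ∀ j, x (i + 1) j - x i j ≤ N ∧ -(N : ℤ) ≤ x (i + 1) j - x i j := by
      intro i hi j
      have h1 := hS hi; rw [Finset.mem_Icc] at h1
      have h2 := hx i h1.1 (by omega) j
      have h3 := hx (i + 1) (by omega) (by omega) j
      constructor <;> linarith [h2.1, h2.2, h3.1, h3.2]
    rw [Finset.mem_Icc]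
    constructor <;> rw [Pi.le_def] <;> intro j <;>
      simp only [hF, Finset.sum_apply, Pi.sub_apply]
    · calc (fun _ : Fin d => -M) j = -M := rfl
        _ ≤ (S.card : ℤ) * (-(N : ℤ)) := by
            rw [hM]; nlinarith [Int.natCast_nonneg N, Int.natCast_nonneg S.card]
        _ = ∑ i ∈ S, (-(N : ℤ)) := by rw [Finset.sum_const, nsmul_eq_mul]
        _ ≤ ∑ i ∈ S, (x (i + 1) j - x i j) :=
            Finset.sum_le_sum (fun i hi => (hb i hi j).2)
    · calc ∑ i ∈ S, (x (i + 1) j - x i j) ≤ ∑ i ∈ S, (N : ℤ) :=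
            Finset.sum_le_sum (fun i hi => (hb i hi j).1)
        _ = (S.card : ℤ) * N := by rw [Finset.sum_const, nsmul_eq_mul]
        _ ≤ M := by
            rw [hM]; nlinarith [Int.natCast_nonneg N]
  have hcards : (Finset.Icc (fun _ : Fin d => -M) (fun _ => M)).card
      < ((Finset.Icc 1 (m - 1)).powerset).card := by
    rw [Finset.card_powerset, Nat.card_Icc, Pi.card_Icc]
    have h1 : (M + 1 - -M).toNat = 2 * (m - 1) * N + 1 := by
      have : M + 1 - -M = ((2 * (m - 1) * N + 1 : ℕ) : ℤ) := by
        rw [hM]; push_cast; ring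
      rw [this, Int.toNat_natCast]
    simp only [Int.card_Icc, h1, Finset.prod_const, Finset.card_univ, Fintype.card_fin]
    simpa using hcard
  obtain ⟨S, hS, T, hT, hST, hFST⟩ :=
    Finset.exists_ne_map_eq_of_card_lt_of_maps_to hcards hmaps
  have e1 : F (S \ T) + F (S ∩ T) = F S := by
    rw [hF]; simp only
    rw [← Finset.sdiff_inter_self_left S T]
    exact Finset.sum_sdiff Finset.inter_subset_left
  have e2 : F (T \ S) + F (T ∩ S) = F T := by
    rw [hF]; simp only
    rw [← Finset.sdiff_inter_self_left T S]
    exact Finset.sum_sdiff Finset.inter_subset_left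
  have hsum : F (S \ T) = F (T \ S) := by
    have h3 : F (S ∩ T) = F (T ∩ S) := by rw [Finset.inter_comm]
    have := e1.trans (hFST.trans e2.symm)
    rw [h3] at this
    exact add_right_cancel this
  have hne : ((S \ T) ∪ (T \ S)).Nonempty := by
    rcases Finset.eq_empty_or_nonempty ((S \ T) ∪ (T \ S)) with h | h
    · exfalso; apply hST
      rw [Finset.union_eq_empty] at h
      exact Finset.Subset.antisymm (Finset.sdiff_eq_empty_iff_subset.mp h.1)
        (Finset.sdiff_eq_empty_iff_subset.mp h.2)
    · exact h
  set k := ((S \ T) ∪ (T \ S)).max' hne with hkdef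
  have hkmem := Finset.max'_mem _ hne
  have hmax : ∀ i ∈ (S \ T) ∪ (T \ S), i ≤ k := fun i hi => Finset.le_max' _ i hi
  rw [Finset.mem_powerset] at hS hT
  have hS'sub : S \ T ⊆ Finset.Icc 1 (m - 1) := (Finset.sdiff_subset).trans hS
  have hT'sub : T \ S ⊆ Finset.Icc 1 (m - 1) := (Finset.sdiff_subset).trans hT
  have hmaxS : ∀ i ∈ S \ T, i ≤ k := fun i hi => hmax i (Finset.mem_union_left _ hi)
  have hmaxT : ∀ i ∈ T \ S, i ≤ k := fun i hi => hmax i (Finset.mem_union_right _ hi)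
  rw [Finset.mem_union] at hkmem
  rcases hkmem with hk | hk
  · have hkT : k ∉ T \ S := by
      rw [Finset.mem_sdiff] at hk ⊢
      tauto
    exact key4 d m N x (S \ T) (T \ S) hS'sub hT'sub k hk hkT hsum hmaxS hmaxT
  · have hkS : k ∉ S \ T := by
      rw [Finset.mem_sdiff] at hk ⊢
      tauto
    exact key4 d m N x (T \ S) (S \ T) hT'sub hS'sub k hk hkS hsum.symm hmaxT hmaxS
end

section
/- Let f : ℝ^d → ℝ be linear, c = sign ∘ f, X ⊆ ℝ^d finite nonempty with minimal-ratio η = (min_{x∈X} |f(x)|)/(max_{x∈X} |f(x)|) > 0. If x₁, …, xₘ ∈ X all satisfy c(xᵢ) = y with |f(x₁)| ≤ … ≤ |f(xₘ)|, and x ∈ X satisfies x − x₁ = Σᵢ₌₁^{m−1} αᵢ(xᵢ₊₁ − xᵢ) with every αᵢ ≥ −η, then c(x) = y. -/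
noncomputable def rsign (t : ℝ) : ℝ := if 0 ≤ t then 1 else -1

theorem stmt6 (d m : ℕ) (hm : 1 ≤ m) (f : (Fin d → ℝ) →ₗ[ℝ] ℝ)
    (X : Finset (Fin d → ℝ)) (hne : X.Nonempty)
    (η : ℝ)
    (hη : η = X.inf' hne (fun z => |f z|) / X.sup' hne (fun z => |f z|))
    (hη0 : 0 < η) (hsup : 0 < X.sup' hne (fun z => |f z|))
    (x : ℕ → (Fin d → ℝ)) (hxX : ∀ i < m, x i ∈ X)
    (y : ℝ) (hy : y = 1 ∨ y = -1)
    (hc : ∀ i < m, rsign (f (x i)) = y)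
    (hmono : ∀ i j, i ≤ j → j < m → |f (x i)| ≤ |f (x j)|)
    (z : Fin d → ℝ) (hzX : z ∈ X) (α : ℕ → ℝ) (hα : ∀ i, -η ≤ α i)
    (hz : z - x 0 = ∑ i ∈ Finset.range (m - 1), α i • (x (i + 1) - x i)) :
    rsign (f z) = y := by
  set S := X.sup' hne (fun z => |f z|) with hS
  set I := X.inf' hne (fun z => |f z|) with hI
  set g : ℕ → ℝ := fun i => y * f (x i) with hg
  have habs : ∀ i < m, g i = |f (x i)| := by
    intro i hi
    have hci := hc i hi
    rcases hy with h | h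
    · subst h
      have hpos : 0 ≤ f (x i) := by
        by_contra h'
        simp [rsign, h'] at hci
        norm_num at hci
      simp [hg, abs_of_nonneg hpos]
    · subst h
      have hneg : ¬ (0 ≤ f (x i)) := by
        intro h'
        simp [rsign, h'] at hci
        norm_num at hci
      push_neg at hneg
      simp [hg, abs_of_neg hneg]
  have hIpos : 0 < I := by
    have : I = η * S := by rw [hη]; field_simp
    rw [this]; positivity
  have hIle : ∀ i < m, I ≤ g i := by
    intro i hi
    rw [habs i hi]
    exact Finset.inf'_le _ (hxX i hi)
  have hΔ : ∀ i ∈ Finset.range (m - 1), 0 ≤ g (i + 1) - g i := by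
    intro i hi
    rw [Finset.mem_range] at hi
    have hi1 : i + 1 < m := by omega
    rw [habs i (by omega), habs (i + 1) hi1]
    have := hmono i (i + 1) (by omega) hi1
    linarith
  have hfz : y * f z = g 0 + ∑ i ∈ Finset.range (m - 1), α i * (g (i + 1) - g i) := by
    have h1 : f z - f (x 0) = ∑ i ∈ Finset.range (m - 1), α i * (f (x (i + 1)) - f (x i)) := by
      have := congrArg f hz
      simpa [map_sub, map_sum, map_smul, smul_eq_mul] using this
    have h2 : y * (f z - f (x 0)) = ∑ i ∈ Finset.range (m - 1), α i * (g (i + 1) - g i) := by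
      rw [h1, Finset.mul_sum]
      apply Finset.sum_congr rfl
      intro i _
      simp only [hg]; ring
    simp only [hg]
    linarith [h2]
  have hsum_ge : ∑ i ∈ Finset.range (m - 1), α i * (g (i + 1) - g i)
      ≥ -η * (g (m - 1) - g 0) := by
    have htel : ∑ i ∈ Finset.range (m - 1), (g (i + 1) - g i) = g (m - 1) - g 0 :=
      Finset.sum_range_sub g (m - 1)
    calc ∑ i ∈ Finset.range (m - 1), α i * (g (i + 1) - g i)
        ≥ ∑ i ∈ Finset.range (m - 1), -η * (g (i + 1) - g i) := by
          apply Finset.sum_le_sum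
          intro i hi
          exact mul_le_mul_of_nonneg_right (hα i) (hΔ i hi)
      _ = -η * (g (m - 1) - g 0) := by rw [← Finset.mul_sum, htel]
  have hm1 : m - 1 < m := by omega
  have hηg : η * g (m - 1) ≤ I := by
    have hle : g (m - 1) ≤ S := by
      rw [habs _ hm1]
      exact Finset.le_sup' (fun z => |f z|) (hxX _ hm1)
    calc η * g (m - 1) ≤ η * S := by
          apply mul_le_mul_of_nonneg_left hle (le_of_lt hη0)
      _ = I := by rw [hη]; field_simp
  have hg0 : I ≤ g 0 := hIle 0 (by omega)
  have hkey : 0 < y * f z := by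
    have h1 : y * f z ≥ g 0 - η * (g (m - 1) - g 0) := by
      rw [hfz]; linarith [hsum_ge]
    have h2 : 0 < η * g 0 := mul_pos hη0 (lt_of_lt_of_le hIpos hg0)
    nlinarith
  rcases hy with h | h
  · subst h
    have : 0 ≤ f z := by nlinarith
    simp [rsign, this]
  · subst h
    have : ¬ (0 ≤ f z) := by intro h'; nlinarith
    simp [rsign, this]
end

section
/- For each n ≥ 1, define x_j = (e_j + e_{n+1})/√2 ∈ ℝ^{n+1} for j = 1,…,n, and for i = 1,…,n define w_i ∈ ℝ^{n+1} by w_i(j) = 1 + j/(10n²) if j = i, w_i(n+1) = −1/2, and w_i(j) = −j/(10n²) otherwise; define w₀ by w₀(n+1) = −1/2 and w₀(j) = −j/(10n²) for j ≤ n. Then for all 0 ≤ i ≤ n and 1 ≤ j ≤ n: sign(⟨w_i, x_j⟩) = +1 if and only if i = j, and |⟨w_i, x_j⟩| = (1/2 + j/(10n²))/√2, which is independent of i. -/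
theorem stmt10 (n : ℕ) (hn : 1 ≤ n) (x w : ℕ → ℕ → ℝ)
    (hx : ∀ j k, x j k =
      ((if k = j then (1 : ℝ) else 0) + (if k = n + 1 then 1 else 0)) / Real.sqrt 2)
    (hw : ∀ i k, w i k = if k = n + 1 then -(1/2 : ℝ)
        else if k = i then 1 + (k : ℝ) / (10 * (n : ℝ) ^ 2)
        else -(k : ℝ) / (10 * (n : ℝ) ^ 2)) :
    ∀ i ≤ n, ∀ j, 1 ≤ j → j ≤ n →
      (rsign (∑ k ∈ Finset.Icc 1 (n + 1), w i k * x j k) = 1 ↔ i = j) ∧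
      |∑ k ∈ Finset.Icc 1 (n + 1), w i k * x j k|
        = (1/2 + (j : ℝ) / (10 * (n : ℝ) ^ 2)) / Real.sqrt 2 := by
  intro i hi j hj1 hjn
  have hs2 : (0:ℝ) < Real.sqrt 2 := Real.sqrt_pos.mpr (by norm_num)
  have hjmem : j ∈ Finset.Icc 1 (n + 1) := Finset.mem_Icc.mpr ⟨hj1, by omega⟩
  have hnmem : n + 1 ∈ Finset.Icc 1 (n + 1) := Finset.mem_Icc.mpr ⟨by omega, le_refl _⟩
  have hjne : j ≠ n + 1 := by omega
  have hsum : (∑ k ∈ Finset.Icc 1 (n + 1), w i k * x j k)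
      = (w i j + w i (n + 1)) / Real.sqrt 2 := by
    have : ∀ k, w i k * x j k
        = ((if k = j then w i k else 0) + (if k = n + 1 then w i k else 0)) / Real.sqrt 2 := by
      intro k
      rw [hx]
      rcases eq_or_ne k j with h1 | h1
      · subst h1; rw [if_pos rfl, if_pos rfl, if_neg hjne, if_neg hjne]; ring
      · rcases eq_or_ne k (n + 1) with h2 | h2
        · subst h2; rw [if_neg h1, if_neg h1, if_pos rfl, if_pos rfl]; ring
        · rw [if_neg h1, if_neg h1, if_neg h2, if_neg h2]; ring
    rw [Finset.sum_congr rfl fun k _ => this k, ← Finset.sum_div,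
      Finset.sum_add_distrib, Finset.sum_ite_eq' _ j (fun k => w i k),
      Finset.sum_ite_eq' _ (n+1) (fun k => w i k), if_pos hjmem, if_pos hnmem]
  have hwn1 : w i (n + 1) = -(1/2 : ℝ) := by rw [hw]; simp
  have hq0 : (0:ℝ) ≤ (j : ℝ) / (10 * (n : ℝ) ^ 2) := by positivity
  rcases eq_or_ne i j with h | h
  · have hwij : w i j = 1 + (j : ℝ) / (10 * (n : ℝ) ^ 2) := by
      rw [hw, if_neg hjne, if_pos h.symm]
    have hval : (∑ k ∈ Finset.Icc 1 (n + 1), w i k * x j k)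
        = (1/2 + (j : ℝ) / (10 * (n : ℝ) ^ 2)) / Real.sqrt 2 := by
      rw [hsum, hwij, hwn1]; ring
    constructor
    · rw [hval]
      simp only [rsign]
      rw [if_pos (by positivity)]
      simp [h]
    · rw [hval, abs_of_nonneg (by positivity)]
  · have hwij : w i j = -(j : ℝ) / (10 * (n : ℝ) ^ 2) := by
      rw [hw, if_neg hjne, if_neg (fun hh => h hh.symm)]
    have hval : (∑ k ∈ Finset.Icc 1 (n + 1), w i k * x j k)
        = -((1/2 + (j : ℝ) / (10 * (n : ℝ) ^ 2)) / Real.sqrt 2) := by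
      rw [hsum, hwij, hwn1, ← neg_div]; ring_nf
    have hneg : (∑ k ∈ Finset.Icc 1 (n + 1), w i k * x j k) < 0 := by
      rw [hval]
      have : (0:ℝ) < (1/2 + (j : ℝ) / (10 * (n : ℝ) ^ 2)) / Real.sqrt 2 := by positivity
      linarith
    constructor
    · simp only [rsign, if_neg (not_le.mpr hneg)]
      constructor
      · intro hc; norm_num at hc
      · intro hc; exact absurd hc h
    · rw [hval, abs_neg, abs_of_nonneg (by positivity)]
end

section
/- Let D be a probability distribution on a set X, let k ≥ 1, and suppose a property P(S, x) (for finite sequences S over X and points x ∈ X) satisfies: (monotonicity) P(S, x) implies P(S', x) whenever S ⊆ S', and (inference) for every multiset Y of size ≥ k there exists y ∈ Y with P(Y \ {y}, y). Then for an i.i.d. sample (x₁, …, x_{4k+1}) ~ D^{4k+1}, we have Pr[P({x₁,…,x_{4k}}, x_{4k+1})] ≥ 3/4. -/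
open MeasureTheory ENNReal

theorem stmt12 (X : Type*) [MeasurableSpace X] [DecidableEq X]
    (μ : Measure X) [IsProbabilityMeasure μ] (k : ℕ) (hk : 1 ≤ k)
    (P : Multiset X → X → Prop)
    (hmono : ∀ S S' x, S ≤ S' → P S x → P S' x)
    (hinf : ∀ Y : Multiset X, k ≤ Multiset.card Y → ∃ y ∈ Y, P (Y.erase y) y) :
    (3/4 : ℝ≥0∞) ≤ Measure.pi (fun _ : Fin (4 * k + 1) => μ)
      {ω | P ↑(List.ofFn fun i : Fin (4 * k) => ω i.castSucc) (ω (Fin.last (4 * k)))} := by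
  classical
  set π : Measure (Fin (4*k+1) → X) := Measure.pi (fun _ => μ) with hπ
  set M : (Fin (4*k+1) → X) → Multiset X := fun ω => (List.ofFn ω : List X) with hM
  -- decomposition of the full multiset
  have hMdec : ∀ ω : Fin (4*k+1) → X,
      M ω = ω (Fin.last (4*k)) ::ₘ ↑(List.ofFn fun i : Fin (4*k) => ω i.castSucc) := by
    intro ω
    show ((List.ofFn ω : List X) : Multiset X) = _
    rw [List.ofFn_succ', List.concat_eq_append]
    exact Multiset.coe_eq_coe.mpr (List.perm_append_singleton _ _)
  -- M as a map over univ.val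
  have hMmap : ∀ ω : Fin (4*k+1) → X, M ω = Multiset.map ω Finset.univ.val := by
    intro ω
    show ((List.ofFn ω : List X) : Multiset X) = _
    rw [List.ofFn_eq_map, ← Multiset.map_coe]
    rfl
  -- M is invariant under permutations
  have hMperm : ∀ (ω : Fin (4*k+1) → X) (σ : Equiv.Perm (Fin (4*k+1))),
      M (fun b => ω (σ b)) = M ω := by
    intro ω σ
    rw [hMmap, hMmap]
    have h2 : Multiset.map (⇑σ) Finset.univ.val = Finset.univ.val := by
      have h3 := congr_arg Finset.val (Finset.map_univ_equiv σ)
      simpa [Finset.map_val] using h3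
    calc Multiset.map (fun b => ω (σ b)) Finset.univ.val
        = Multiset.map ω (Multiset.map (⇑σ) Finset.univ.val) := by
          rw [Multiset.map_map]; rfl
      _ = Multiset.map ω Finset.univ.val := by rw [h2]
  -- the bad-index count is < k
  have hbad : ∀ ω : Fin (4*k+1) → X,
      (Finset.univ.filter fun i => ¬ P ((M ω).erase (ω i)) (ω i)).card < k := by
    intro ω
    by_contra h
    push_neg at h
    set F := Finset.univ.filter fun i => ¬ P ((M ω).erase (ω i)) (ω i) with hF
    have hcard : k ≤ Multiset.card (F.val.map ω) := by simpa using h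
    obtain ⟨y, hy, hPy⟩ := hinf _ hcard
    obtain ⟨i, hiF, hiy⟩ := Multiset.mem_map.mp hy
    have hle : F.val.map ω ≤ M ω := by
      rw [hMmap]
      exact Multiset.map_le_map (Finset.val_le_iff.mpr (Finset.filter_subset _ _))
    have hgood := hmono _ _ y (Multiset.erase_le_erase y hle) hPy
    exact (Finset.mem_filter.mp (Finset.mem_def.mpr hiF)).2 (hiy ▸ hgood)
  set A : Set (Fin (4*k+1) → X) :=
    {ω | P ↑(List.ofFn fun i : Fin (4 * k) => ω i.castSucc) (ω (Fin.last (4 * k)))} with hA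
  -- membership of A in terms of M
  have hAiff : ∀ ω : Fin (4*k+1) → X,
      (ω ∈ A ↔ P ((M ω).erase (ω (Fin.last (4*k)))) (ω (Fin.last (4*k)))) := by
    intro ω
    rw [hMdec ω, Multiset.erase_cons_head]
    exact Iff.rfl
  set T := toMeasurable π A with hT
  have hTm : MeasurableSet T := measurableSet_toMeasurable π A
  have hAT : A ⊆ T := subset_toMeasurable π A
  have hπT : π T = π A := measure_toMeasurable A
  -- the swap equivalences
  set e : Fin (4*k+1) → ((Fin (4*k+1) → X) ≃ᵐ (Fin (4*k+1) → X)) :=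
    fun i => MeasurableEquiv.piCongrLeft (fun _ : Fin (4*k+1) => X)
      (Equiv.swap i (Fin.last (4*k))) with he_def
  have he : ∀ i, MeasurePreserving (e i) π π := fun i =>
    measurePreserving_piCongrLeft (fun _ => μ) _
  have hecoe : ∀ (i : Fin (4*k+1)) (ω : Fin (4*k+1) → X) (b : Fin (4*k+1)),
      e i ω b = ω (Equiv.swap i (Fin.last (4*k)) b) := by
    intro i ω b
    have h := Equiv.piCongrLeft_apply_apply (fun _ : Fin (4*k+1) => X)
      (Equiv.swap i (Fin.last (4*k))) ω (Equiv.swap i (Fin.last (4*k)) b)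
    rw [Equiv.swap_apply_self] at h
    exact h
  set g : Fin (4*k+1) → Set (Fin (4*k+1) → X) := fun i => (e i) ⁻¹' Tᶜ with hg
  have hgm : ∀ i, MeasurableSet (g i) := fun i => (e i).measurable hTm.compl
  have hgπ : ∀ i, π (g i) = π Tᶜ := fun i =>
    (he i).measure_preimage hTm.compl.nullMeasurableSet
  -- each g i is contained in the bad set for index i
  have hgsub : ∀ (i : Fin (4*k+1)) (ω : Fin (4*k+1) → X),
      ω ∈ g i → ¬ P ((M ω).erase (ω i)) (ω i) := by
    intro i ω hω hP
    apply hω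
    show e i ω ∈ T
    apply hAT
    show (e i) ω ∈ A
    rw [hAiff]
    have h1 : e i ω = fun b => ω (Equiv.swap i (Fin.last (4*k)) b) := funext (hecoe i ω)
    have h2 : (e i ω) (Fin.last (4*k)) = ω i := by
      rw [hecoe]; rw [Equiv.swap_apply_right]
    have h3 : M (e i ω) = M ω := by rw [h1]; exact hMperm ω _
    rw [h2, h3]
    exact hP
  -- sum the measures
  have hsum : ((4*k+1 : ℕ) : ℝ≥0∞) * π Tᶜ ≤ ((k-1 : ℕ) : ℝ≥0∞) := by
    have h1 : ∑ i : Fin (4*k+1), π (g i) = ((4*k+1 : ℕ) : ℝ≥0∞) * π Tᶜ := by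
      simp [hgπ, Finset.sum_const, mul_comm]
    rw [← h1]
    calc ∑ i : Fin (4*k+1), π (g i)
        = ∫⁻ ω, ∑ i : Fin (4*k+1), (g i).indicator (1 : (Fin (4*k+1) → X) → ℝ≥0∞) ω ∂π := by
          rw [lintegral_finset_sum _ (fun i _ => (measurable_one.indicator (hgm i)))]
          exact Finset.sum_congr rfl fun i _ => (lintegral_indicator_one (hgm i)).symm
      _ ≤ ∫⁻ _ω, ((k-1 : ℕ) : ℝ≥0∞) ∂π := by
          apply lintegral_mono
          intro ω
          have hcount : ∑ i : Fin (4*k+1), (g i).indicator (1 : (Fin (4*k+1) → X) → ℝ≥0∞) ω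
              = ((Finset.univ.filter fun i => ω ∈ g i).card : ℝ≥0∞) := by
            simp [Set.indicator_apply]
          refine le_trans (le_of_eq hcount) ?_
          have hsubf : (Finset.univ.filter fun i => ω ∈ g i)
              ⊆ (Finset.univ.filter fun i => ¬ P ((M ω).erase (ω i)) (ω i)) := by
            intro i hi
            rw [Finset.mem_filter] at hi ⊢
            exact ⟨hi.1, hgsub i ω hi.2⟩
          have hle2 : (Finset.univ.filter fun i => ω ∈ g i).card ≤ k - 1 :=
            le_trans (Finset.card_le_card hsubf) (Nat.le_sub_one_of_lt (hbad ω))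
          exact_mod_cast Nat.cast_le.mpr hle2
      _ = ((k-1 : ℕ) : ℝ≥0∞) := by simp
  -- conclude
  have hS4 : π Tᶜ ≤ 1/4 := by
    have h4 : ((4*k+1 : ℕ) : ℝ≥0∞) * (4 * π Tᶜ) ≤ ((4*k+1 : ℕ) : ℝ≥0∞) * 1 := by
      calc ((4*k+1 : ℕ) : ℝ≥0∞) * (4 * π Tᶜ)
          = 4 * (((4*k+1 : ℕ) : ℝ≥0∞) * π Tᶜ) := by ring
        _ ≤ 4 * ((k-1 : ℕ) : ℝ≥0∞) := by exact mul_le_mul_right hsum 4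
        _ ≤ ((4*k+1 : ℕ) : ℝ≥0∞) * 1 := by
            rw [mul_one, show (4 : ℝ≥0∞) * ((k-1 : ℕ) : ℝ≥0∞) = ((4 * (k-1) : ℕ) : ℝ≥0∞) by
              rw [Nat.cast_mul]; norm_num]
            exact_mod_cast (by omega : (4 * (k-1) : ℕ) ≤ 4*k+1)
    have hne0 : ((4*k+1 : ℕ) : ℝ≥0∞) ≠ 0 := by
      simp
    have hnetop : ((4*k+1 : ℕ) : ℝ≥0∞) ≠ ⊤ := ENNReal.natCast_ne_top _
    have h5 : 4 * π Tᶜ ≤ 1 := by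
      exact (ENNReal.mul_le_mul_iff_right hne0 hnetop).mp h4
    rw [ENNReal.le_div_iff_mul_le (by norm_num) (by norm_num)]
    rw [mul_comm]
    exact h5
  have hTS : π T + π Tᶜ = 1 := by
    rw [measure_add_measure_compl hTm, measure_univ]
  have hfin : (3/4 : ℝ≥0∞) + 1/4 ≤ π T + 1/4 := by
    have : (3/4 : ℝ≥0∞) + 1/4 = 1 := by
      rw [ENNReal.div_add_div_same]
      norm_num
      exact ENNReal.div_self (by norm_num) (by norm_num)
    rw [this]
    calc (1:ℝ≥0∞) = π T + π Tᶜ := hTS.symm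
      _ ≤ π T + 1/4 := add_le_add_right hS4 _
  have := (ENNReal.add_le_add_iff_right (by norm_num : (1/4 : ℝ≥0∞) ≠ ⊤)).mp hfin
  rw [hπT] at this
  exact this
end

section
/- Let Z be a set of size k ≥ 3 with uniform distribution D, and suppose hypotheses c and c_z (z ∈ Z) satisfy: c_z(z) ≠ c(z) but c_z agrees with c on Z \ {z}, and every allowed query involving only points of Z \ {z} has the same answer under c_z and c. If a (possibly randomized) learning algorithm makes fewer than k/(2t) queries, each of which is t-local (determined by at most t points), then when the target is c_z for z uniform in Z, with probability at least 1/6 the algorithm's output hypothesis has error at least 1/k on D. -/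
/-- The list of answers obtained by an adaptive deterministic querying strategy `σ`
(choosing the next query from the past answers) after `n` queries, when the true
answer to each query is given by `ans`. -/
def runAnswers {Q : Type*} (σ : List Bool → Q) (ans : Q → Bool) : ℕ → List Bool
  | 0 => []
  | n + 1 => runAnswers σ ans n ++ [ans (σ (runAnswers σ ans n))]

theorem stmt14 (Z : Type*) [Fintype Z] [DecidableEq Z] (k t : ℕ)
    (hk : 3 ≤ k) (hcard : Fintype.card Z = k) (ht : 1 ≤ t)
    (c : Z → Bool) (cz : Z → Z → Bool)
    (h1 : ∀ z, cz z z ≠ c z) (h2 : ∀ z x, x ≠ z → cz z x = c x)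
    (Q : Type*) (loc : Q → Finset Z) (hloc : ∀ q, (loc q).card ≤ t)
    (ansC : Q → Bool) (ansZ : Z → Q → Bool)
    (hans : ∀ z q, z ∉ loc q → ansZ z q = ansC q)
    (Nq : ℕ) (hNq : 2 * t * Nq < k)
    (σ : List Bool → Q) (out : List Bool → Z → Option Bool) :
    (k : ℝ) ≤ 6 * (Finset.univ.filter fun z : Z =>
      1 ≤ (Finset.univ.filter fun x : Z =>
        out (runAnswers σ (ansZ z) Nq) x ≠ some (cz z x)).card).card := by
  classical
  set S : Finset Z := (Finset.range Nq).biUnion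
    (fun i => loc (σ (runAnswers σ ansC i))) with hS
  have hScard : S.card ≤ Nq * t := by
    calc S.card ≤ ∑ i ∈ Finset.range Nq, (loc (σ (runAnswers σ ansC i))).card :=
          Finset.card_biUnion_le
      _ ≤ ∑ _i ∈ Finset.range Nq, t := Finset.sum_le_sum (fun i _ => hloc _)
      _ = Nq * t := by simp [Finset.sum_const, Finset.card_range]
  -- running against cz z gives the same transcript if z ∉ S
  have hrun : ∀ z, z ∉ S → ∀ n, n ≤ Nq →
      runAnswers σ (ansZ z) n = runAnswers σ ansC n := by
    intro z hz n
    induction n with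
    | zero => intro _; rfl
    | succ n ih =>
      intro hn
      have hn' : n ≤ Nq := Nat.le_of_succ_le hn
      have hih := ih hn'
      show runAnswers σ (ansZ z) n ++ _ = runAnswers σ ansC n ++ _
      rw [hih]
      have hnotin : z ∉ loc (σ (runAnswers σ ansC n)) := by
        intro hmem
        exact hz (Finset.mem_biUnion.mpr ⟨n, Finset.mem_range.mpr (Nat.lt_of_succ_le hn), hmem⟩)
      rw [hans z _ hnotin]
  set L : List Bool := runAnswers σ ansC Nq with hL
  set B : Finset Z := Finset.univ.filter fun z : Z =>
      1 ≤ (Finset.univ.filter fun x : Z =>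
        out (runAnswers σ (ansZ z) Nq) x ≠ some (cz z x)).card with hB
  set T : Finset Z := Finset.univ.filter
    (fun z => z ∉ S ∧ ∀ x, out L x = some (cz z x)) with hT
  have hTcard : T.card ≤ 1 := by
    apply Finset.card_le_one.mpr
    intro a ha b hb
    by_contra hab
    rw [hT, Finset.mem_filter] at ha hb
    have ha2 := ha.2.2 a
    have hb2 := hb.2.2 a
    rw [ha2] at hb2
    have : cz a a = cz b a := Option.some_injective _ hb2
    rw [h2 b a hab] at this
    exact h1 a this
  have hcover : (Finset.univ : Finset Z) ⊆ B ∪ S ∪ T := by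
    intro z _
    by_cases hzB : z ∈ B
    · exact Finset.mem_union_left _ (Finset.mem_union_left _ hzB)
    by_cases hzS : z ∈ S
    · exact Finset.mem_union_left _ (Finset.mem_union_right _ hzS)
    · refine Finset.mem_union_right _ ?_
      rw [hB, Finset.mem_filter] at hzB
      push_neg at hzB
      have hz0 := hzB (Finset.mem_univ z)
      have hempty : (Finset.univ.filter fun x : Z =>
          out (runAnswers σ (ansZ z) Nq) x ≠ some (cz z x)) = ∅ := by
        rw [← Finset.card_eq_zero]; omega
      rw [hT, Finset.mem_filter]
      refine ⟨Finset.mem_univ z, hzS, fun x => ?_⟩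
      by_contra hx
      have : x ∈ (Finset.univ.filter fun x : Z =>
          out (runAnswers σ (ansZ z) Nq) x ≠ some (cz z x)) := by
        rw [Finset.mem_filter]
        refine ⟨Finset.mem_univ x, ?_⟩
        rw [hrun z hzS Nq le_rfl]
        exact hx
      rw [hempty] at this
      exact absurd this (Finset.notMem_empty x)
  have hkle : k ≤ B.card + S.card + T.card := by
    calc k = (Finset.univ : Finset Z).card := by rw [Finset.card_univ, hcard]
      _ ≤ (B ∪ S ∪ T).card := Finset.card_le_card hcover
      _ ≤ (B ∪ S).card + T.card := Finset.card_union_le _ _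
      _ ≤ B.card + S.card + T.card := by
          exact Nat.add_le_add_right (Finset.card_union_le _ _) _
  have hfinal : k ≤ 6 * B.card := by
    have h2tNq : 2 * (t * Nq) < k := by linarith [hNq, Nat.mul_assoc 2 t Nq] 
    have : Nq * t = t * Nq := Nat.mul_comm _ _
    omega
  have := Nat.cast_le (α := ℝ) |>.mpr hfinal
  push_cast at this ⊢
  linarith
end
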